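/- Let 0 < p < 4 and let w̄ be the ℓ_p Lewis weights of A. If w is any positive weight vector with w ≈_α w̄ entrywise, then T(w) ≈_{α^{|p/2−1|}} w̄, where T(w)_i = (a_iᵀ(AᵀW^{1−2/p}A)⁻¹a_i)^{p/2}. -/

import Mathlib

/-!
Raising to the power `1 - 2/p` turns `w ≈_α w̄` into `w^{1-2/p} ≈_β w̄^{1-2/p}` with
`β = α^{|1-2/p|}`, so the quadratic forms of `AᵀW^{1-2/p}A` and `AᵀW̄^{1-2/p}A` agree up to
the factor `β`. Inversion reverses the Loewner order, so every leverage score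
`a_iᵀ(AᵀW^{1-2/p}A)⁻¹a_i` is within a factor `β` of its value at `w̄`, and raising to the power
`p/2` gives the factor `β^{p/2} = α^{|p/2-1|}`.
-/

open Matrix

/-- The paper's `x ≈_c y`. -/
def Approx (c x y : ℝ) : Prop := 1 / c * x ≤ y ∧ y ≤ c * x

namespace Approx

variable {c x y : ℝ}

theorem iff_le_mul (hc : 0 < c) : Approx c x y ↔ x ≤ c * y ∧ y ≤ c * x := by
  rw [Approx, one_div, inv_mul_le_iff₀ hc]

theorem symm (hc : 0 < c) (h : Approx c x y) : Approx c y x :=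
  (iff_le_mul hc).2 ((iff_le_mul hc).1 h).symm

theorem pos (hc : 0 < c) (hx : 0 < x) (h : Approx c x y) : 0 < y :=
  lt_of_lt_of_le (by positivity) h.1

theorem rpow_le (hc : 0 < c) (hx : 0 < x) (h : Approx c x y) (e : ℝ) :
    y ^ e ≤ c ^ |e| * x ^ e := by
  obtain ⟨hxy, hyx⟩ := (iff_le_mul hc).1 h
  rcases le_or_gt 0 e with he | he
  · calc y ^ e ≤ (c * x) ^ e := Real.rpow_le_rpow (h.pos hc hx).le hyx he
      _ = c ^ |e| * x ^ e := by rw [abs_of_nonneg he, Real.mul_rpow hc.le hx.le]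
  · calc y ^ e ≤ (x / c) ^ e :=
          Real.rpow_le_rpow_of_nonpos (by positivity) ((div_le_iff₀' hc).2 hxy) he.le
      _ = c ^ |e| * x ^ e := by
          rw [abs_of_neg he, Real.div_rpow hx.le hc.le, Real.rpow_neg hc.le, div_eq_inv_mul]

theorem rpow (hc : 0 < c) (hx : 0 < x) (h : Approx c x y) (e : ℝ) :
    Approx (c ^ |e|) (x ^ e) (y ^ e) :=
  (iff_le_mul (by positivity)).2 ⟨(h.symm hc).rpow_le hc (h.pos hc hx) e, h.rpow_le hc hx e⟩

end Approx

theorem Matrix.mulVec_injective_of_rank_eq_card {K m n : Type*} [Field K] [Fintype m]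
    [Fintype n] {A : Matrix m n K} (hA : A.rank = Fintype.card n) :
    Function.Injective A.mulVec := by
  rw [← coe_mulVecLin, ← LinearMap.ker_eq_bot, ← Submodule.finrank_eq_zero]
  have := A.mulVecLin.finrank_range_add_finrank_ker
  rw [← Matrix.rank, hA, Module.finrank_fintype_fun_eq_card] at this
  omega

section WeightedGram

variable {m n : Type*} [Fintype m] [Fintype n] [DecidableEq m]

theorem dotProduct_transpose_mul_diagonal_mul_mulVec (A : Matrix m n ℝ) (v : m → ℝ)
    (x : n → ℝ) : x ⬝ᵥ (Aᵀ * diagonal v * A) *ᵥ x = ∑ j, v j * (A *ᵥ x) j ^ 2 := by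
  rw [← mulVec_mulVec, ← mulVec_mulVec, dotProduct_mulVec, vecMul_transpose]
  simp only [dotProduct, mulVec_diagonal, sq]
  exact Finset.sum_congr rfl fun j _ => by ring

theorem dotProduct_transpose_mul_diagonal_mul_mulVec_le (A : Matrix m n ℝ) {v v' : m → ℝ}
    {c : ℝ} (h : ∀ j, v j ≤ c * v' j) (x : n → ℝ) :
    x ⬝ᵥ (Aᵀ * diagonal v * A) *ᵥ x ≤ c * (x ⬝ᵥ (Aᵀ * diagonal v' * A) *ᵥ x) := by
  simp only [dotProduct_transpose_mul_diagonal_mul_mulVec, Finset.mul_sum, ← mul_assoc]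
  exact Finset.sum_le_sum fun j _ => mul_le_mul_of_nonneg_right (h j) (sq_nonneg _)

theorem posDef_transpose_mul_diagonal_mul {A : Matrix m n ℝ} (hA : Function.Injective A.mulVec)
    {v : m → ℝ} (hv : ∀ j, 0 < v j) : (Aᵀ * diagonal v * A).PosDef := by
  simpa using (posDef_diagonal_iff.2 hv).conjTranspose_mul_mul_same hA

end WeightedGram

section InverseQuadraticForm

variable {n : Type*} [Fintype n] [DecidableEq n] {M N : Matrix n n ℝ}

-- `x ⬝ᵥ M⁻¹ *ᵥ x` is the maximum of `2 (y ⬝ᵥ x) - y ⬝ᵥ M *ᵥ y`, attained at `y = M⁻¹ *ᵥ x`.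
theorem two_mul_dotProduct_sub_le_dotProduct_inv_mulVec (hM : M.PosDef) (x y : n → ℝ) :
    2 * (y ⬝ᵥ x) - y ⬝ᵥ M *ᵥ y ≤ x ⬝ᵥ M⁻¹ *ᵥ x := by
  set u := M⁻¹ *ᵥ x
  have hMu : M *ᵥ u = x := by
    rw [mulVec_mulVec, mul_nonsing_inv _ hM.det_pos.ne'.isUnit, one_mulVec]
  have hMt : Mᵀ = M := by simpa using hM.1.eq
  have huMy : u ⬝ᵥ M *ᵥ y = y ⬝ᵥ x := by
    rw [dotProduct_mulVec, ← mulVec_transpose, hMt, hMu, dotProduct_comm]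
  have hsq := hM.posSemidef.dotProduct_mulVec_nonneg (y - u)
  rw [star_trivial, mulVec_sub, hMu, sub_dotProduct, dotProduct_sub, dotProduct_sub, huMy,
    dotProduct_comm u x] at hsq
  linarith

theorem dotProduct_inv_mulVec_le_mul (hM : M.PosDef) (hN : IsUnit N.det) {c : ℝ} (hc : 0 < c)
    (h : ∀ y, y ⬝ᵥ M *ᵥ y ≤ c * (y ⬝ᵥ N *ᵥ y)) (x : n → ℝ) :
    x ⬝ᵥ N⁻¹ *ᵥ x ≤ c * (x ⬝ᵥ M⁻¹ *ᵥ x) := by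
  set u := N⁻¹ *ᵥ x
  have hNu : N *ᵥ u = x := by rw [mulVec_mulVec, mul_nonsing_inv _ hN, one_mulVec]
  have hMu : u ⬝ᵥ M *ᵥ u ≤ c * (x ⬝ᵥ u) := by simpa [hNu, dotProduct_comm u x] using h u
  have hdual := two_mul_dotProduct_sub_le_dotProduct_inv_mulVec hM x (c⁻¹ • u)
  simp only [mulVec_smul, dotProduct_smul, smul_dotProduct, smul_eq_mul,
    dotProduct_comm u x] at hdual
  have hMu' : c⁻¹ * (c⁻¹ * (u ⬝ᵥ M *ᵥ u)) ≤ c⁻¹ * (x ⬝ᵥ u) :=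
    calc c⁻¹ * (c⁻¹ * (u ⬝ᵥ M *ᵥ u)) ≤ c⁻¹ * (c⁻¹ * (c * (x ⬝ᵥ u))) := by gcongr
      _ = c⁻¹ * (x ⬝ᵥ u) := by field_simp
  rw [← inv_mul_le_iff₀ hc]
  linarith

end InverseQuadraticForm

theorem approx_dotProduct_inv_transpose_mul_diagonal_mul_mulVec {m n : Type*} [Fintype m]
    [Fintype n] [DecidableEq m] [DecidableEq n] {A : Matrix m n ℝ}
    (hA : Function.Injective A.mulVec) {c : ℝ} (hc : 0 < c) {v v' : m → ℝ}
    (hv : ∀ j, 0 < v j) (h : ∀ j, Approx c (v j) (v' j)) (x : n → ℝ) :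
    Approx c (x ⬝ᵥ (Aᵀ * diagonal v * A)⁻¹ *ᵥ x) (x ⬝ᵥ (Aᵀ * diagonal v' * A)⁻¹ *ᵥ x) := by
  have h' j := (Approx.iff_le_mul hc).1 (h j)
  have hPD := posDef_transpose_mul_diagonal_mul hA hv
  have hPD' := posDef_transpose_mul_diagonal_mul hA fun j => (h j).pos hc (hv j)
  exact (Approx.iff_le_mul hc).2
    ⟨dotProduct_inv_mulVec_le_mul hPD' hPD.det_pos.ne'.isUnit hc
      (dotProduct_transpose_mul_diagonal_mul_mulVec_le A fun j => (h' j).2) x,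
    dotProduct_inv_mulVec_le_mul hPD hPD'.det_pos.ne'.isUnit hc
      (dotProduct_transpose_mul_diagonal_mul_mulVec_le A fun j => (h' j).1) x⟩

theorem stmt7_general {n d : ℕ} (A : Matrix (Fin n) (Fin d) ℝ) (hA : A.rank = d)
    (p α : ℝ) (hp : 0 < p) (hα : 1 ≤ α)
    (wbar w : Fin n → ℝ) (hwbar : ∀ i, 0 < wbar i)
    (hlewis : ∀ i,
      (A i ⬝ᵥ (Aᵀ * Matrix.diagonal (fun j => wbar j ^ (1 - 2 / p)) * A)⁻¹.mulVec (A i)) ^ (p / 2)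
        = wbar i)
    (happrox : ∀ i, (1 / α) * wbar i ≤ w i ∧ w i ≤ α * wbar i) :
    ∀ i,
      (1 / (α ^ |p / 2 - 1|)) * wbar i
        ≤ (A i ⬝ᵥ (Aᵀ * Matrix.diagonal (fun j => w j ^ (1 - 2 / p)) * A)⁻¹.mulVec (A i)) ^ (p / 2) ∧
      (A i ⬝ᵥ (Aᵀ * Matrix.diagonal (fun j => w j ^ (1 - 2 / p)) * A)⁻¹.mulVec (A i)) ^ (p / 2)
        ≤ (α ^ |p / 2 - 1|) * wbar i := by
  intro i
  have hα0 : 0 < α := zero_lt_one.trans_le hα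
  have hA' : Function.Injective A.mulVec := mulVec_injective_of_rank_eq_card (by simpa using hA)
  have hwbar' j : 0 < wbar j ^ (1 - 2 / p) := Real.rpow_pos_of_pos (hwbar j) _
  have hweights j : Approx (α ^ |1 - 2 / p|) (wbar j ^ (1 - 2 / p)) (w j ^ (1 - 2 / p)) :=
    Approx.rpow hα0 (hwbar j) (happrox j) _
  have hleverage := approx_dotProduct_inv_transpose_mul_diagonal_mul_mulVec hA' (by positivity)
    hwbar' hweights (A i)
  have hlewis_i := hlewis i
  set q := A i ⬝ᵥ (Aᵀ * diagonal (fun j => wbar j ^ (1 - 2 / p)) * A)⁻¹ *ᵥ A i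
  have hq : 0 < q := by
    refine lt_of_le_of_ne ?_ fun hq0 => (hwbar i).ne' ?_
    · simpa using (posDef_transpose_mul_diagonal_mul hA' hwbar').inv.posSemidef
        |>.dotProduct_mulVec_nonneg (A i)
    · rw [← hlewis_i, ← hq0, Real.zero_rpow (by positivity)]
  have hexp : |1 - 2 / p| * |p / 2| = |p / 2 - 1| := by
    rw [← abs_mul]
    congr 1
    field_simp
  have := hleverage.rpow (by positivity) hq (p / 2)
  rwa [hlewis_i, ← Real.rpow_mul hα0.le, hexp] at this

theorem stmt7 {n d : ℕ} (A : Matrix (Fin n) (Fin d) ℝ) (hA : A.rank = d)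
    (p α : ℝ) (hp : 0 < p) (hp4 : p < 4) (hα : 1 ≤ α)
    (wbar w : Fin n → ℝ) (hwbar : ∀ i, 0 < wbar i) (hw : ∀ i, 0 < w i)
    (hlewis : ∀ i,
      (A i ⬝ᵥ (Aᵀ * Matrix.diagonal (fun j => wbar j ^ (1 - 2 / p)) * A)⁻¹.mulVec (A i)) ^ (p / 2)
        = wbar i)
    (happrox : ∀ i, (1 / α) * wbar i ≤ w i ∧ w i ≤ α * wbar i) :
    ∀ i,
      (1 / (α ^ |p / 2 - 1|)) * wbar i
        ≤ (A i ⬝ᵥ (Aᵀ * Matrix.diagonal (fun j => w j ^ (1 - 2 / p)) * A)⁻¹.mulVec (A i)) ^ (p / 2) ∧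
      (A i ⬝ᵥ (Aᵀ * Matrix.diagonal (fun j => w j ^ (1 - 2 / p)) * A)⁻¹.mulVec (A i)) ^ (p / 2)
        ≤ (α ^ |p / 2 - 1|) * wbar i :=
  stmt7_general A hA p α hp hα wbar w hwbar hlewis happrox
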